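/- (Davies) Consider the graph over (ℤ², 1) with standard weights: b(z,w) = 1 if |z₁ − w₁| + |z₂ − w₂| = 1 and b(z,w) = 0 otherwise, and m ≡ 1. Then ρ_ℰ(x,y) ~ |x − y| as |x − y| → ∞, where |·| is the Euclidean norm on ℝ²; that is, for every ε > 0 there exists R > 0 such that |ρ_ℰ(x,y)/|x − y| − 1| < ε for all x, y ∈ ℤ² with |x − y| ≥ R. -/

import Mathlib

noncomputable section

/-- Standard weights on `ℤ²`: `b(z,w) = 1` iff `|z₁ − w₁| + |z₂ − w₂| = 1`. -/
def bZ2 (z w : ℤ × ℤ) : ℝ := if |z.1 - w.1| + |z.2 - w.2| = 1 then 1 else 0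

/-- The energy density `Γ(f)(x) = (1/2) Σ_y b(x,y)(f(x) − f(y))²` (measure `m ≡ 1`). -/
def gammaDensityZ2 (f : ℤ × ℤ → ℝ) (x : ℤ × ℤ) : ℝ :=
  (2 : ℝ)⁻¹ * ∑' y, bZ2 x y * (f x - f y) ^ 2

/-- `ρ_ℰ(x,y) = sup{|ψ(x) − ψ(y)| : ψ finitely supported, ‖Γ(ψ)‖_∞ ≤ 1}`. -/
def rhoEZ2 (x y : ℤ × ℤ) : ℝ :=
  sSup {r | ∃ ψ : ℤ × ℤ → ℝ, (Function.support ψ).Finite ∧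
    (∀ z, gammaDensityZ2 ψ z ≤ 1) ∧ r = |ψ x - ψ y|}

/-- The Euclidean norm of `x − y` for `x, y ∈ ℤ²`. -/
def euclDist (x y : ℤ × ℤ) : ℝ :=
  Real.sqrt (((x.1 - y.1 : ℤ) : ℝ) ^ 2 + ((x.2 - y.2 : ℤ) : ℝ) ^ 2)

/-!
Lower bound: let `v` be the unit vector along `x - y`, `d = |x - y|` and `s > 0`. The tent
`z ↦ max 0 (d - N (z - x))` for the norm `N w = max |⟨v, w⟩| (s |⟨v⊥, w⟩|)` changes by at most
`N (±e₁)`, `N (±e₂)` along the edges at a vertex, so its `Γ` is at most `1 + s²`. Scaled by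
`1 / (1 + s)` it is admissible and finitely supported, and it separates `x` from `y` by
`d / (1 + s)`.

Upper bound: `Γ ψ ≤ 1` bounds the forward gradient `(Δ₁ψ, Δ₂ψ)` by `1` only on average over the
edges at a vertex. Averaging `ψ` over an `L × L` square gives a function `g` with the pointwise
bound `1 + 1 / L` (Cauchy–Schwarz, every edge being seen from both endpoints), at a cost of `4L`
in sup norm. Let the walk from `y` step by `e₁` with probability `α = p / (p + q)` and by `e₂`
otherwise. Each step raises `𝔼 g` by at most `(1 + 1 / L) ‖(α, 1 - α)‖`, which adds up to
`(1 + 1 / L) ‖(p, q)‖` after `p + q` steps. The walk then lies on the antidiagonal through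
`y + (p, q)` at expected distance `O(√(p + q))` from it. Reflections of `ℤ²` preserve `Γ` and
reduce everything to `p, q ≥ 0`.
-/

open Finset fwdDiff BigOperators

lemma gammaDensityZ2_eq (f : ℤ × ℤ → ℝ) (x : ℤ × ℤ) :
    gammaDensityZ2 f x = 2⁻¹ * ((f x - f (x + (1, 0))) ^ 2 + (f x - f (x - (1, 0))) ^ 2
      + (f x - f (x + (0, 1))) ^ 2 + (f x - f (x - (0, 1))) ^ 2) := by
  rw [gammaDensityZ2, tsum_eq_sum (s := {x + (1, 0), x - (1, 0), x + (0, 1), x - (0, 1)})]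
  · rw [sum_insert (by simp [Prod.ext_iff]; omega), sum_insert (by simp [Prod.ext_iff]),
      sum_insert (by simp [Prod.ext_iff]; omega), sum_singleton]
    simp [bZ2]
    ring
  · intro y hy
    rw [bZ2, if_neg, zero_mul]
    contrapose! hy
    rw [abs_eq_max_neg, abs_eq_max_neg] at hy
    simp only [mem_insert, mem_singleton, Prod.ext_iff, Prod.fst_add, Prod.snd_add,
      Prod.fst_sub, Prod.snd_sub]
    omega

lemma two_mul_gammaDensityZ2 (f : ℤ × ℤ → ℝ) (x : ℤ × ℤ) :
    2 * gammaDensityZ2 f x = Δ_[(1, 0)] f x ^ 2 + Δ_[(1, 0)] f (x - (1, 0)) ^ 2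
      + Δ_[(0, 1)] f x ^ 2 + Δ_[(0, 1)] f (x - (0, 1)) ^ 2 := by
  simp only [gammaDensityZ2_eq, fwdDiff, sub_add_cancel]
  ring

lemma gammaDensityZ2_le {f : ℤ × ℤ → ℝ} {x : ℤ × ℤ} {K₁ K₂ : ℝ}
    (h₁ : |f x - f (x + (1, 0))| ≤ K₁) (h₁' : |f x - f (x - (1, 0))| ≤ K₁)
    (h₂ : |f x - f (x + (0, 1))| ≤ K₂) (h₂' : |f x - f (x - (0, 1))| ≤ K₂) :
    gammaDensityZ2 f x ≤ K₁ ^ 2 + K₂ ^ 2 := by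
  have sq_le {a K : ℝ} (h : |a| ≤ K) : a ^ 2 ≤ K ^ 2 := by
    simpa only [sq_abs] using pow_le_pow_left₀ (abs_nonneg a) h 2
  rw [gammaDensityZ2_eq]
  linarith [sq_le h₁, sq_le h₁', sq_le h₂, sq_le h₂']

lemma gammaDensityZ2_comp (σ : Equiv.Perm (ℤ × ℤ)) (hσ : ∀ z w, bZ2 (σ z) (σ w) = bZ2 z w)
    (f : ℤ × ℤ → ℝ) (x : ℤ × ℤ) :
    gammaDensityZ2 (f ∘ σ) x = gammaDensityZ2 f (σ x) := by
  simp only [gammaDensityZ2, Function.comp_apply]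
  rw [← σ.tsum_eq (fun y ↦ bZ2 (σ x) y * (f (σ x) - f y) ^ 2)]
  simp only [hσ]

section Steps

variable {M : Type*} [AddCommGroup M] {f : M → ℝ} {v : M} {K : ℝ}

lemma abs_sub_le_nsmul_of_forall (h : ∀ z, |f (z + v) - f z| ≤ K) (n : ℕ) (z : M) :
    |f (z + n • v) - f z| ≤ n * K := by
  induction n with
  | zero => simp
  | succ n ih =>
    calc |f (z + (n + 1) • v) - f z|
        ≤ |f (z + n • v + v) - f (z + n • v)| + |f (z + n • v) - f z| := by
          rw [succ_nsmul, ← add_assoc]; exact abs_sub_le _ _ _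
      _ ≤ K + n * K := add_le_add (h _) ih
      _ = (n + 1 : ℕ) * K := by push_cast; ring

lemma abs_sub_le_zsmul_of_forall (h : ∀ z, |f (z + v) - f z| ≤ K) (k : ℤ) (z : M) :
    |f (z + k • v) - f z| ≤ |k| * K := by
  obtain ⟨n, rfl | rfl⟩ := Int.eq_nat_or_neg k
  · simpa using abs_sub_le_nsmul_of_forall h n z
  · simpa [abs_sub_comm] using abs_sub_le_nsmul_of_forall h n (z + (-(n : ℤ)) • v)

end Steps

lemma abs_fwdDiff_le_two {f : ℤ × ℤ → ℝ} (hf : ∀ z, gammaDensityZ2 f z ≤ 1) (z : ℤ × ℤ) :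
    |Δ_[(1, 0)] f z| ≤ 2 ∧ |Δ_[(0, 1)] f z| ≤ 2 := by
  have h := two_mul_gammaDensityZ2 f z
  have hz := hf z
  constructor <;> refine abs_le.mpr (abs_le_of_sq_le_sq' ?_ zero_le_two) <;>
    nlinarith [sq_nonneg (Δ_[(1, 0)] f z), sq_nonneg (Δ_[(1, 0)] f (z - (1, 0))),
      sq_nonneg (Δ_[(0, 1)] f z), sq_nonneg (Δ_[(0, 1)] f (z - (0, 1)))]

lemma abs_sub_le_of_gammaDensityZ2_le_one {f : ℤ × ℤ → ℝ} (hf : ∀ z, gammaDensityZ2 f z ≤ 1)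
    (z w : ℤ × ℤ) : |f (z + w) - f z| ≤ 2 * (|(w.1 : ℝ)| + |(w.2 : ℝ)|) := by
  have hw : z + w = z + w.1 • (1, 0) + w.2 • (0, 1) := by ext <;> simp [add_assoc]
  have h₁ := abs_sub_le_zsmul_of_forall (fun u ↦ (abs_fwdDiff_le_two hf u).1) w.1 z
  have h₂ := abs_sub_le_zsmul_of_forall (fun u ↦ (abs_fwdDiff_le_two hf u).2) w.2
    (z + w.1 • (1, 0))
  push_cast at h₁ h₂
  rw [hw]
  linarith [abs_sub_le (f (z + w.1 • (1, 0) + w.2 • (0, 1))) (f (z + w.1 • (1, 0))) (f z)]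

lemma rhoEZ2_le {x y : ℤ × ℤ} {B : ℝ}
    (h : ∀ ψ : ℤ × ℤ → ℝ, (∀ z, gammaDensityZ2 ψ z ≤ 1) → |ψ x - ψ y| ≤ B) :
    rhoEZ2 x y ≤ B :=
  csSup_le ⟨0, 0, by simp, fun z ↦ by simp [gammaDensityZ2], by simp⟩
    (by rintro _ ⟨ψ, -, hψ, rfl⟩; exact h ψ hψ)

lemma le_rhoEZ2 {ψ : ℤ × ℤ → ℝ} (hfin : (Function.support ψ).Finite)
    (hψ : ∀ z, gammaDensityZ2 ψ z ≤ 1) (x y : ℤ × ℤ) : |ψ x - ψ y| ≤ rhoEZ2 x y := by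
  refine le_csSup ⟨2 * (|((x - y).1 : ℝ)| + |((x - y).2 : ℝ)|), ?_⟩ ⟨ψ, hfin, hψ, rfl⟩
  rintro _ ⟨φ, -, hφ, rfl⟩
  simpa using abs_sub_le_of_gammaDensityZ2_le_one hφ y (x - y)

def reflect (u₁ u₂ : ℤˣ) : Equiv.Perm (ℤ × ℤ) :=
  (Units.mulLeft u₁).prodCongr (Units.mulLeft u₂)

@[simp]
lemma reflect_apply (u₁ u₂ : ℤˣ) (z : ℤ × ℤ) : reflect u₁ u₂ z = (u₁ * z.1, u₂ * z.2) := rfl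

lemma reflect_reflect (u₁ u₂ : ℤˣ) (z : ℤ × ℤ) : reflect u₁ u₂ (reflect u₁ u₂ z) = z := by
  simp [← mul_assoc, ← Units.val_mul, Int.units_mul_self]

lemma bZ2_reflect (u₁ u₂ : ℤˣ) (z w : ℤ × ℤ) :
    bZ2 (reflect u₁ u₂ z) (reflect u₁ u₂ w) = bZ2 z w := by
  simp [bZ2, ← mul_sub, abs_mul, Int.isUnit_iff_abs_eq.mp u₁.isUnit,
    Int.isUnit_iff_abs_eq.mp u₂.isUnit]

lemma exists_unit_mul_eq_abs (n : ℤ) : ∃ u : ℤˣ, u * n = |n| := by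
  rcases abs_choice n with h | h
  · exact ⟨1, by simp [h]⟩
  · exact ⟨-1, by simp [h]⟩

section LowerBound

variable {v₁ v₂ s d : ℝ}

def rectNorm (v₁ v₂ s : ℝ) (w : ℤ × ℤ) : ℝ :=
  max |v₁ * w.1 + v₂ * w.2| (s * |v₁ * w.2 - v₂ * w.1|)

lemma abs_rectNorm_sub_le (hs : 0 ≤ s) (z w : ℤ × ℤ) :
    |rectNorm v₁ v₂ s z - rectNorm v₁ v₂ s w| ≤ rectNorm v₁ v₂ s (z - w) := by
  refine (abs_max_sub_max_le_max _ _ _ _).trans (max_le_max ?_ ?_)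
  · refine (abs_abs_sub_abs_le_abs_sub _ _).trans_eq ?_
    simp only [Prod.fst_sub, Prod.snd_sub, Int.cast_sub]
    ring_nf
  · rw [← mul_sub, abs_mul, abs_of_nonneg hs]
    refine mul_le_mul_of_nonneg_left ((abs_abs_sub_abs_le_abs_sub _ _).trans_eq ?_) hs
    simp only [Prod.fst_sub, Prod.snd_sub, Int.cast_sub]
    ring_nf

def rectTent (v₁ v₂ s d : ℝ) (x z : ℤ × ℤ) : ℝ :=
  max 0 (d - rectNorm v₁ v₂ s (z - x))

lemma abs_rectTent_sub_le (hs : 0 ≤ s) (x z w : ℤ × ℤ) :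
    |rectTent v₁ v₂ s d x z - rectTent v₁ v₂ s d x w| ≤ rectNorm v₁ v₂ s (z - w) := by
  refine (abs_max_sub_max_le_max 0 _ 0 _).trans ?_
  rw [sub_self, abs_zero, max_eq_right (abs_nonneg _), sub_sub_sub_cancel_left, abs_sub_comm]
  simpa using abs_rectNorm_sub_le (v₁ := v₁) (v₂ := v₂) hs (z - x) (w - x)

lemma gammaDensityZ2_rectTent_le (hv : v₁ ^ 2 + v₂ ^ 2 = 1) (hs : 0 ≤ s) {β : ℝ} (hβ : 0 ≤ β)
    (hβs : β ^ 2 * (1 + s ^ 2) ≤ 1) (x z : ℤ × ℤ) :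
    gammaDensityZ2 (fun w ↦ β * rectTent v₁ v₂ s d x w) z ≤ 1 := by
  have edge (w : ℤ × ℤ) : |β * rectTent v₁ v₂ s d x z - β * rectTent v₁ v₂ s d x w|
      ≤ β * rectNorm v₁ v₂ s (z - w) := by
    rw [← mul_sub, abs_mul, abs_of_nonneg hβ]
    exact mul_le_mul_of_nonneg_left (abs_rectTent_sub_le hs x z w) hβ
  have max_sq (a b : ℝ) : max |a| (s * |b|) ^ 2 ≤ a ^ 2 + s ^ 2 * b ^ 2 := by
    rcases max_choice |a| (s * |b|) with h | h <;> rw [h] <;>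
      nlinarith [sq_abs a, sq_abs b, sq_nonneg a, sq_nonneg (s * b)]
  refine (gammaDensityZ2_le (K₁ := β * max |v₁| (s * |v₂|)) (K₂ := β * max |v₂| (s * |v₁|))
    ((edge _).trans_eq ?_) ((edge _).trans_eq ?_) ((edge _).trans_eq ?_)
    ((edge _).trans_eq ?_)).trans ?_
  on_goal 5 => nlinarith [max_sq v₁ v₂, max_sq v₂ v₁, sq_nonneg β]
  all_goals simp [rectNorm]

lemma rectTent_support_finite (hv : v₁ ^ 2 + v₂ ^ 2 = 1) (hs : 0 < s) (x : ℤ × ℤ) :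
    (Function.support (rectTent v₁ v₂ s d x)).Finite := by
  refine (isCompact_closedBall x (d + d / s)).finite_of_discrete.subset fun z hz ↦ ?_
  have hN : rectNorm v₁ v₂ s (z - x) < d := by
    by_contra! h
    exact hz (max_eq_left (by linarith))
  set a : ℝ := v₁ * (z - x).1 + v₂ * (z - x).2
  set b : ℝ := v₁ * (z - x).2 - v₂ * (z - x).1
  have ha : |a| < d := (le_max_left _ _).trans_lt hN
  have hb : |b| < d / s := by
    rw [lt_div_iff₀ hs, mul_comm]
    exact (le_max_right _ _).trans_lt hN
  have hv₁ : |v₁| ≤ 1 := abs_le.mpr (abs_le_of_sq_le_sq' (by nlinarith) zero_le_one)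
  have hv₂ : |v₂| ≤ 1 := abs_le.mpr (abs_le_of_sq_le_sq' (by nlinarith) zero_le_one)
  have combo {p q : ℝ} (hp : |p| ≤ 1) (hq : |q| ≤ 1) : |p * a + q * b| < d + d / s := by
    refine (abs_add_le _ _).trans_lt ?_
    rw [abs_mul, abs_mul]
    nlinarith [abs_nonneg a, abs_nonneg b]
  have h₁ : ((z - x).1 : ℝ) = v₁ * a + -v₂ * b := by linear_combination (-(z - x).1 : ℝ) * hv
  have h₂ : ((z - x).2 : ℝ) = v₂ * a + v₁ * b := by linear_combination (-(z - x).2 : ℝ) * hv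
  simp only [Prod.fst_sub, Prod.snd_sub, Int.cast_sub] at h₁ h₂
  rw [Metric.mem_closedBall, Prod.dist_eq, Int.dist_eq, Int.dist_eq, h₁, h₂]
  exact max_le (combo hv₁ (by rwa [abs_neg])).le (combo hv₂ hv₁).le

lemma div_one_add_le_rhoEZ2 {x y : ℤ × ℤ} (hxy : x ≠ y) (hs : 0 < s) :
    euclDist x y / (1 + s) ≤ rhoEZ2 x y := by
  set a₁ : ℝ := ((x.1 - y.1 : ℤ) : ℝ)
  set a₂ : ℝ := ((x.2 - y.2 : ℤ) : ℝ)
  set d := euclDist x y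
  have ha : 0 < a₁ ^ 2 + a₂ ^ 2 := by
    have : a₁ ≠ 0 ∨ a₂ ≠ 0 := by
      by_contra! h
      exact hxy (Prod.ext (by simpa [a₁, sub_eq_zero] using h.1)
        (by simpa [a₂, sub_eq_zero] using h.2))
    rcases this with h | h <;> positivity
  have hd : 0 < d := Real.sqrt_pos.mpr ha
  have hd2 : d ^ 2 = a₁ ^ 2 + a₂ ^ 2 := Real.sq_sqrt ha.le
  have hv : (a₁ / d) ^ 2 + (a₂ / d) ^ 2 = 1 := by
    rw [div_pow, div_pow, ← add_div, ← hd2, div_self (by positivity)]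
  set T := rectTent (a₁ / d) (a₂ / d) s d x
  have hTx : T x = d := by simp [T, rectTent, rectNorm, hd.le]
  have hℓ : a₁ / d * ((y - x).1 : ℝ) + a₂ / d * ((y - x).2 : ℝ) = -d := by
    have e₁ : ((y - x).1 : ℝ) = -a₁ := by simp [a₁]
    have e₂ : ((y - x).2 : ℝ) = -a₂ := by simp [a₂]
    rw [e₁, e₂]
    field_simp
    linarith
  have hTy : T y = 0 := by
    refine max_eq_left (sub_nonpos.mpr ?_)
    calc d = |a₁ / d * ((y - x).1 : ℝ) + a₂ / d * ((y - x).2 : ℝ)| := by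
          rw [hℓ, abs_neg, abs_of_pos hd]
      _ ≤ rectNorm (a₁ / d) (a₂ / d) s (y - x) := le_max_left _ _
  have hΓ := gammaDensityZ2_rectTent_le (d := d) hv hs.le (β := (1 + s)⁻¹) (by positivity)
    (by rw [inv_pow, inv_mul_le_iff₀ (by positivity)]; nlinarith) x
  have hfin := (rectTent_support_finite (d := d) hv hs x).subset
    (Function.support_mul_subset_right (fun _ ↦ (1 + s)⁻¹) _)
  calc d / (1 + s) = |(1 + s)⁻¹ * T x - (1 + s)⁻¹ * T y| := by
        rw [hTx, hTy, mul_zero, sub_zero, abs_of_pos (by positivity), div_eq_inv_mul]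
    _ ≤ rhoEZ2 x y := le_rhoEZ2 hfin hΓ x y

end LowerBound

section Binomial

variable {α : ℝ}

-- The binomial probabilities `n.choose i * α ^ i * (1 - α) ^ (n - i)`, written as Bernstein
-- polynomials to reuse Mathlib's sum and variance identities for them.
def binomWeight (α : ℝ) (n i : ℕ) : ℝ := (bernsteinPolynomial ℝ n i).eval α

lemma binomWeight_eq (n i : ℕ) : binomWeight α n i = n.choose i * α ^ i * (1 - α) ^ (n - i) := by
  simp [binomWeight, bernsteinPolynomial]

lemma binomWeight_nonneg (h₀ : 0 ≤ α) (h₁ : α ≤ 1) (n i : ℕ) : 0 ≤ binomWeight α n i := by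
  rw [binomWeight_eq]
  have : 0 ≤ 1 - α := by linarith
  positivity

lemma sum_binomWeight (n : ℕ) : ∑ i ∈ range (n + 1), binomWeight α n i = 1 := by
  simpa [binomWeight, Polynomial.eval_finsetSum] using
    congrArg (Polynomial.eval α) (bernsteinPolynomial.sum ℝ n)

lemma sum_binomWeight_mul_sq (n : ℕ) :
    ∑ i ∈ range (n + 1), binomWeight α n i * (n * α - i) ^ 2 = n * α * (1 - α) := by
  simpa [binomWeight, Polynomial.eval_finsetSum, mul_comm] using
    congrArg (Polynomial.eval α) (bernsteinPolynomial.variance ℝ n)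

lemma binomWeight_succ_succ (n i : ℕ) :
    binomWeight α (n + 1) (i + 1) = α * binomWeight α n i + (1 - α) * binomWeight α n (i + 1) := by
  simp only [binomWeight_eq, Nat.choose_succ_succ', Nat.cast_add, Nat.add_sub_add_right]
  rcases lt_trichotomy i n with h | rfl | h
  · obtain ⟨k, rfl⟩ := Nat.exists_eq_add_of_lt h
    rw [show i + k + 1 - i = k + 1 by omega, show i + k + 1 - (i + 1) = k by omega]
    ring
  · simp [pow_succ']
  · simp [Nat.choose_eq_zero_of_lt h, Nat.choose_eq_zero_of_lt (h.trans (Nat.lt_succ_self i))]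

lemma sum_binomWeight_succ_mul (n : ℕ) (h : ℕ → ℝ) :
    ∑ i ∈ range (n + 2), binomWeight α (n + 1) i * h i
      = ∑ i ∈ range (n + 1), binomWeight α n i * (α * h (i + 1) + (1 - α) * h i) := by
  have h₀ : binomWeight α (n + 1) 0 = (1 - α) * binomWeight α n 0 := by
    simp [binomWeight_eq, pow_succ]; ring
  have top : binomWeight α n (n + 1) = 0 := by simp [binomWeight_eq]
  calc ∑ i ∈ range (n + 2), binomWeight α (n + 1) i * h i
      = ∑ i ∈ range (n + 1), binomWeight α (n + 1) (i + 1) * h (i + 1)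
          + binomWeight α (n + 1) 0 * h 0 :=
        sum_range_succ' _ _
    _ = ∑ i ∈ range (n + 1), α * binomWeight α n i * h (i + 1)
          + (1 - α) * ∑ i ∈ range (n + 2), binomWeight α n i * h i := by
        rw [sum_range_succ' (fun i ↦ binomWeight α n i * h i), h₀]
        simp only [binomWeight_succ_succ, add_mul, mul_add, sum_add_distrib, mul_sum, mul_assoc]
        ring
    _ = ∑ i ∈ range (n + 1), binomWeight α n i * (α * h (i + 1) + (1 - α) * h i) := by
        rw [sum_range_succ (fun i ↦ binomWeight α n i * h i) (n + 1), top, zero_mul, add_zero,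
          mul_sum, ← sum_add_distrib]
        exact sum_congr rfl fun i _ ↦ by ring

lemma sum_binomWeight_mul_abs_le (h₀ : 0 ≤ α) (h₁ : α ≤ 1) (n : ℕ) :
    ∑ i ∈ range (n + 1), binomWeight α n i * |n * α - i| ≤ √n / 2 := by
  have jensen := (convexOn_pow 2).map_sum_le (t := range (n + 1)) (p := fun i ↦ |n * α - i|)
    (fun i _ ↦ binomWeight_nonneg h₀ h₁ n i) (sum_binomWeight n)
    (fun i _ ↦ Set.mem_Ici.mpr (abs_nonneg _))
  simp only [smul_eq_mul, sq_abs, sum_binomWeight_mul_sq] at jensen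
  have hS : 0 ≤ ∑ i ∈ range (n + 1), binomWeight α n i * |n * α - i| :=
    sum_nonneg fun i _ ↦ mul_nonneg (binomWeight_nonneg h₀ h₁ n i) (abs_nonneg _)
  rw [le_div_iff₀ two_pos, Real.le_sqrt (by positivity) (Nat.cast_nonneg n)]
  nlinarith [mul_nonneg (Nat.cast_nonneg n : (0 : ℝ) ≤ n) (sq_nonneg (2 * α - 1))]

end Binomial

section Walk

variable {g : ℤ × ℤ → ℝ} {c α : ℝ}

lemma mul_add_mul_le_sqrt_mul {a b A B : ℝ} (hc : 0 ≤ c) (h : a ^ 2 + b ^ 2 ≤ c ^ 2) :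
    A * a + B * b ≤ √(A ^ 2 + B ^ 2) * c := by
  refine (abs_le_of_sq_le_sq' ?_ (by positivity)).2
  rw [mul_pow, Real.sq_sqrt (by positivity)]
  nlinarith [sq_nonneg (A * b - B * a), sq_nonneg A, sq_nonneg B]

def walkPos (y : ℤ × ℤ) (n i : ℕ) : ℤ × ℤ := y + ((i : ℤ), (n : ℤ) - i)

lemma walkPos_succ_succ (y : ℤ × ℤ) (n i : ℕ) :
    walkPos y (n + 1) (i + 1) = walkPos y n i + (1, 0) := by
  ext <;> simp [walkPos, add_assoc]

lemma walkPos_succ (y : ℤ × ℤ) (n i : ℕ) : walkPos y (n + 1) i = walkPos y n i + (0, 1) := by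
  ext <;> simp [walkPos, add_assoc]
  ring

-- `𝔼 g` after `n` steps of the walk from `y` moving by `(1, 0)` with probability `α`, else `(0, 1)`.
def walkMean (g : ℤ × ℤ → ℝ) (y : ℤ × ℤ) (α : ℝ) (n : ℕ) : ℝ :=
  ∑ i ∈ range (n + 1), binomWeight α n i * g (walkPos y n i)

lemma walkMean_zero (y : ℤ × ℤ) : walkMean g y α 0 = g y := by
  simp [walkMean, walkPos, binomWeight_eq, Prod.mk_zero_zero]

variable (hc : 0 ≤ c) (hg : ∀ z, Δ_[(1, 0)] g z ^ 2 + Δ_[(0, 1)] g z ^ 2 ≤ c ^ 2)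
include hc hg

lemma abs_sub_le_antidiagonal (k : ℤ) (z : ℤ × ℤ) :
    |g (z + k • (1, -1)) - g z| ≤ |k| * (2 * c) := by
  refine abs_sub_le_zsmul_of_forall (fun w ↦ ?_) k z
  have h₁ : |Δ_[(1, 0)] g w| ≤ c := abs_le.mpr (abs_le_of_sq_le_sq' (by nlinarith [hg w]) hc)
  have h₂ : |Δ_[(0, 1)] g (w + (1, -1))| ≤ c :=
    abs_le.mpr (abs_le_of_sq_le_sq' (by nlinarith [hg (w + (1, -1))]) hc)
  have hw : w + (1, -1) + (0, 1) = w + (1, 0) := by ext <;> simp [add_assoc]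
  rw [fwdDiff, hw] at h₂
  rw [fwdDiff] at h₁
  calc |g (w + (1, -1)) - g w|
      ≤ |g (w + (1, 0)) - g (w + (1, -1))| + |g (w + (1, 0)) - g w| := by
        rw [abs_sub_comm (g (w + (1, 0)))]; exact abs_sub_le _ _ _
    _ ≤ 2 * c := by linarith

lemma walkMean_succ_le (h₀ : 0 ≤ α) (h₁ : α ≤ 1) (y : ℤ × ℤ) (n : ℕ) :
    walkMean g y α (n + 1) ≤ walkMean g y α n + √(α ^ 2 + (1 - α) ^ 2) * c := by
  have step (z : ℤ × ℤ) :
      α * g (z + (1, 0)) + (1 - α) * g (z + (0, 1)) ≤ g z + √(α ^ 2 + (1 - α) ^ 2) * c := by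
    have := mul_add_mul_le_sqrt_mul (A := α) (B := 1 - α) hc (hg z)
    simp only [fwdDiff] at this
    linarith
  calc walkMean g y α (n + 1)
      = ∑ i ∈ range (n + 1), binomWeight α n i *
          (α * g (walkPos y n i + (1, 0)) + (1 - α) * g (walkPos y n i + (0, 1))) := by
        simp only [walkMean, sum_binomWeight_succ_mul, walkPos_succ_succ]
        simp only [walkPos_succ]
    _ ≤ ∑ i ∈ range (n + 1), binomWeight α n i *
          (g (walkPos y n i) + √(α ^ 2 + (1 - α) ^ 2) * c) :=
        sum_le_sum fun i _ ↦ mul_le_mul_of_nonneg_left (step _) (binomWeight_nonneg h₀ h₁ n i)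
    _ = walkMean g y α n + √(α ^ 2 + (1 - α) ^ 2) * c := by
        simp only [mul_add, sum_add_distrib, ← sum_mul, sum_binomWeight, one_mul, walkMean]

lemma walkMean_le (h₀ : 0 ≤ α) (h₁ : α ≤ 1) (y : ℤ × ℤ) (n : ℕ) :
    walkMean g y α n ≤ g y + n * (√(α ^ 2 + (1 - α) ^ 2) * c) := by
  induction n with
  | zero => simp [walkMean_zero]
  | succ n ih =>
    push_cast
    linarith [walkMean_succ_le hc hg h₀ h₁ y n]

lemma sub_walkMean_le (h₀ : 0 ≤ α) (h₁ : α ≤ 1) (y : ℤ × ℤ) {p n : ℕ} (hp : n * α = p) :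
    g (walkPos y n p) - walkMean g y α n ≤ √n * c := by
  have term (i : ℕ) : g (walkPos y n p) - g (walkPos y n i) ≤ |n * α - i| * (2 * c) := by
    have h := abs_sub_le_antidiagonal hc hg ((p : ℤ) - i) (walkPos y n i)
    have e : walkPos y n i + ((p : ℤ) - i) • (1, -1) = walkPos y n p := by
      ext <;> simp [walkPos, add_assoc]
    rw [e, Int.cast_abs, Int.cast_sub, Int.cast_natCast, Int.cast_natCast, ← hp] at h
    exact (le_abs_self _).trans h
  calc g (walkPos y n p) - walkMean g y α n
      = ∑ i ∈ range (n + 1), binomWeight α n i * (g (walkPos y n p) - g (walkPos y n i)) := by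
        simp only [mul_sub, sum_sub_distrib, ← sum_mul, sum_binomWeight, one_mul, walkMean]
    _ ≤ ∑ i ∈ range (n + 1), binomWeight α n i * |n * α - i| * (2 * c) := by
        refine sum_le_sum fun i _ ↦ ?_
        rw [mul_assoc]
        exact mul_le_mul_of_nonneg_left (term i) (binomWeight_nonneg h₀ h₁ n i)
    _ ≤ √n / 2 * (2 * c) := by
        rw [← sum_mul]
        exact mul_le_mul_of_nonneg_right (sum_binomWeight_mul_abs_le h₀ h₁ n) (by positivity)
    _ = √n * c := by ring

lemma sub_le_of_sq_fwdDiff_le (y : ℤ × ℤ) (p q : ℕ) :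
    g (y + ((p : ℤ), (q : ℤ))) - g y ≤ (√(p ^ 2 + q ^ 2) + √(p + q)) * c := by
  rcases Nat.eq_zero_or_pos (p + q) with h | hn
  · obtain ⟨rfl, rfl⟩ : p = 0 ∧ q = 0 := by omega
    simp [Prod.mk_zero_zero]
  set n := p + q
  have hnR : (0 : ℝ) < n := by exact_mod_cast hn
  have h₀ : 0 ≤ (p : ℝ) / n := by positivity
  have h₁ : (p : ℝ) / n ≤ 1 := div_le_one_of_le₀ (by norm_cast; omega) hnR.le
  have hp : n * ((p : ℝ) / n) = p := mul_div_cancel₀ _ hnR.ne'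
  have hpos : walkPos y n p = y + ((p : ℤ), (q : ℤ)) := by ext <;> simp [walkPos, n]
  have hlen : n * √(((p : ℝ) / n) ^ 2 + (1 - (p : ℝ) / n) ^ 2) = √(p ^ 2 + q ^ 2) := by
    have hq : (q : ℝ) = n - p := by push_cast [n]; ring
    have : (p : ℝ) ^ 2 + q ^ 2 = n ^ 2 * (((p : ℝ) / n) ^ 2 + (1 - (p : ℝ) / n) ^ 2) := by
      rw [hq]
      field_simp
    rw [this, Real.sqrt_mul (sq_nonneg _), Real.sqrt_sq hnR.le]
  have walk := walkMean_le hc hg h₀ h₁ y n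
  have collect := sub_walkMean_le hc hg h₀ h₁ y hp
  rw [hpos] at collect
  rw [← mul_assoc, hlen] at walk
  have hn' : √(n : ℝ) = √(p + q) := by simp [n]
  rw [hn'] at collect
  linarith

lemma abs_sub_le_of_sq_fwdDiff_le (y : ℤ × ℤ) (p q : ℕ) :
    |g (y + ((p : ℤ), (q : ℤ))) - g y| ≤ (√(p ^ 2 + q ^ 2) + √(p + q)) * c := by
  have hg' (z : ℤ × ℤ) : Δ_[(1, 0)] (-g) z ^ 2 + Δ_[(0, 1)] (-g) z ^ 2 ≤ c ^ 2 := by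
    convert hg z using 2 <;> simp only [fwdDiff, Pi.neg_apply] <;> ring
  have := sub_le_of_sq_fwdDiff_le hc hg' y p q
  simp only [Pi.neg_apply, neg_sub_neg] at this
  exact abs_le.mpr ⟨by linarith, sub_le_of_sq_fwdDiff_le hc hg y p q⟩

end Walk

section BoxAverage

lemma sq_expect_le {ι : Type*} {s : Finset ι} (hs : s.Nonempty) (f : ι → ℝ) :
    (𝔼 i ∈ s, f i) ^ 2 ≤ 𝔼 i ∈ s, f i ^ 2 := by
  simpa [expect_const hs] using expect_mul_sq_le_sq_mul_sq s (fun _ ↦ (1 : ℝ)) f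

lemma sum_le_sum_sub_of_add_mem {M : Type*} [AddCommGroup M] {s t : Finset M} {F : M → ℝ}
    (hF : ∀ u, 0 ≤ F u) {v : M} (hst : ∀ w ∈ s, w + v ∈ t) :
    ∑ w ∈ s, F w ≤ ∑ u ∈ t, F (u - v) := by
  calc ∑ w ∈ s, F w = ∑ u ∈ s.map (addRightEmbedding v), F (u - v) := by simp
    _ ≤ ∑ u ∈ t, F (u - v) := sum_le_sum_of_subset_of_nonneg
        (by simpa [Finset.subset_iff] using hst) fun u _ _ ↦ hF _

def square (L : ℕ) : Finset (ℤ × ℤ) := Ico 0 (L : ℤ) ×ˢ Ico 0 (L : ℤ)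

def boxAvg (L : ℕ) (f : ℤ × ℤ → ℝ) (z : ℤ × ℤ) : ℝ := 𝔼 w ∈ square L, f (z + w)

variable {f : ℤ × ℤ → ℝ} {L : ℕ}

lemma fwdDiff_boxAvg (v z : ℤ × ℤ) :
    Δ_[v] (boxAvg L f) z = 𝔼 w ∈ square L, Δ_[v] f (z + w) := by
  simp only [fwdDiff, boxAvg, ← expect_sub_distrib, add_right_comm]

lemma sum_square_sq_fwdDiff_le (hf : ∀ z, gammaDensityZ2 f z ≤ 1) (z : ℤ × ℤ) :
    ∑ w ∈ square L, (Δ_[(1, 0)] f (z + w) ^ 2 + Δ_[(0, 1)] f (z + w) ^ 2) ≤ (L + 1) ^ 2 := by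
  -- Every forward edge from the square has both endpoints in `T`: it is counted twice in `∑ 2Γ`.
  set T : Finset (ℤ × ℤ) := Icc 0 (L : ℤ) ×ˢ Icc 0 (L : ℤ)
  have hsub (v : ℤ × ℤ) (hv : 0 ≤ v.1 ∧ v.1 ≤ 1 ∧ 0 ≤ v.2 ∧ v.2 ≤ 1) (w : ℤ × ℤ)
      (hw : w ∈ square L) :
      w + v ∈ T := by
    simp only [square, T, mem_product, mem_Ico, mem_Icc, Prod.fst_add, Prod.snd_add] at hw ⊢
    omega
  have h₁ := sum_le_sum_sub_of_add_mem (t := T) (fun u ↦ sq_nonneg (Δ_[(1, 0)] f (z + u)))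
    (hsub 0 (by simp))
  have h₁' := sum_le_sum_sub_of_add_mem (t := T) (fun u ↦ sq_nonneg (Δ_[(1, 0)] f (z + u)))
    (hsub (1, 0) (by simp))
  have h₂ := sum_le_sum_sub_of_add_mem (t := T) (fun u ↦ sq_nonneg (Δ_[(0, 1)] f (z + u)))
    (hsub 0 (by simp))
  have h₂' := sum_le_sum_sub_of_add_mem (t := T) (fun u ↦ sq_nonneg (Δ_[(0, 1)] f (z + u)))
    (hsub (0, 1) (by simp))
  have hT : ∑ u ∈ T, 2 * gammaDensityZ2 f (z + u) ≤ 2 * (L + 1) ^ 2 := by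
    calc ∑ u ∈ T, 2 * gammaDensityZ2 f (z + u) ≤ ∑ u ∈ T, (2 : ℝ) :=
          sum_le_sum fun u _ ↦ by linarith [hf (z + u)]
      _ = 2 * (L + 1) ^ 2 := by simp [T]; ring
  simp only [two_mul_gammaDensityZ2, sum_add_distrib, sub_zero, add_sub_assoc] at hT h₁ h₂
  simp only [sum_add_distrib]
  linarith

lemma card_square (L : ℕ) : #(square L) = L ^ 2 := by
  simp [square, sq]

lemma square_nonempty (hL : 0 < L) : (square L).Nonempty := by
  simpa [square] using hL

lemma sq_fwdDiff_boxAvg_le (hf : ∀ z, gammaDensityZ2 f z ≤ 1) (hL : 0 < L) (z : ℤ × ℤ) :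
    Δ_[(1, 0)] (boxAvg L f) z ^ 2 + Δ_[(0, 1)] (boxAvg L f) z ^ 2 ≤ (1 + 1 / L) ^ 2 := by
  have hLR : (0 : ℝ) < L := by exact_mod_cast hL
  rw [fwdDiff_boxAvg, fwdDiff_boxAvg]
  calc (𝔼 w ∈ square L, Δ_[(1, 0)] f (z + w)) ^ 2 + (𝔼 w ∈ square L, Δ_[(0, 1)] f (z + w)) ^ 2
      ≤ 𝔼 w ∈ square L, (Δ_[(1, 0)] f (z + w) ^ 2 + Δ_[(0, 1)] f (z + w) ^ 2) := by
        rw [expect_add_distrib]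
        exact add_le_add (sq_expect_le (square_nonempty hL) _) (sq_expect_le (square_nonempty hL) _)
    _ ≤ (L + 1) ^ 2 / L ^ 2 := by
        rw [expect_eq_sum_div_card, card_square, Nat.cast_pow]
        gcongr
        exact sum_square_sq_fwdDiff_le hf z
    _ = (1 + 1 / L) ^ 2 := by field_simp

lemma abs_boxAvg_sub_le (hf : ∀ z, gammaDensityZ2 f z ≤ 1) (hL : 0 < L) (z : ℤ × ℤ) :
    |boxAvg L f z - f z| ≤ 4 * L := by
  have hne := square_nonempty hL
  rw [boxAvg, ← expect_const hne (f z), ← expect_sub_distrib]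
  refine (abs_expect_le _ _).trans (expect_le hne fun w hw ↦ ?_)
  simp only [square, mem_product, mem_Ico] at hw
  have h₁ : |(w.1 : ℝ)| ≤ L := by
    rw [abs_of_nonneg (by exact_mod_cast hw.1.1)]; exact_mod_cast hw.1.2.le
  have h₂ : |(w.2 : ℝ)| ≤ L := by
    rw [abs_of_nonneg (by exact_mod_cast hw.2.1)]; exact_mod_cast hw.2.2.le
  linarith [abs_sub_le_of_gammaDensityZ2_le_one hf z w]

end BoxAverage

section UpperBound

variable {f : ℤ × ℤ → ℝ} {L : ℕ}

lemma abs_apply_add_sub_le (hf : ∀ z, gammaDensityZ2 f z ≤ 1) (hL : 0 < L) (y : ℤ × ℤ)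
    (p q : ℕ) : |f (y + ((p : ℤ), (q : ℤ))) - f y|
      ≤ (1 + 1 / L) * (√(p ^ 2 + q ^ 2) + √(p + q)) + 8 * L := by
  set x := y + ((p : ℤ), (q : ℤ))
  have walk := abs_sub_le_of_sq_fwdDiff_le (by positivity) (sq_fwdDiff_boxAvg_le hf hL) y p q
  have hx := abs_boxAvg_sub_le hf hL x
  have hy := abs_boxAvg_sub_le hf hL y
  rw [abs_sub_comm] at hx
  calc |f x - f y| ≤ |f x - boxAvg L f x| + |boxAvg L f x - f y| := abs_sub_le _ _ _
    _ ≤ |f x - boxAvg L f x| + (|boxAvg L f x - boxAvg L f y| + |boxAvg L f y - f y|) := by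
        gcongr; exact abs_sub_le _ _ _
    _ ≤ _ := by linarith

lemma abs_sub_le_euclDist (hf : ∀ z, gammaDensityZ2 f z ≤ 1) (hL : 0 < L) (x y : ℤ × ℤ) :
    |f x - f y| ≤ (1 + 1 / L) * (euclDist x y + √(2 * euclDist x y)) + 8 * L := by
  obtain ⟨u₁, hu₁⟩ := exists_unit_mul_eq_abs (x.1 - y.1)
  obtain ⟨u₂, hu₂⟩ := exists_unit_mul_eq_abs (x.2 - y.2)
  set σ := reflect u₁ u₂
  have hσf (z : ℤ × ℤ) : gammaDensityZ2 (f ∘ σ) z ≤ 1 := by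
    rw [gammaDensityZ2_comp σ (bZ2_reflect u₁ u₂)]; exact hf _
  have key := abs_apply_add_sub_le hσf hL (σ y) (x.1 - y.1).natAbs (x.2 - y.2).natAbs
  have hσx : σ y + (((x.1 - y.1).natAbs : ℤ), ((x.2 - y.2).natAbs : ℤ)) = σ x := by
    ext <;> simp [σ, ← hu₁, ← hu₂, mul_sub]
  rw [hσx] at key
  simp only [Function.comp_apply, σ, reflect_reflect, Nat.cast_natAbs, Int.cast_abs,
    sq_abs] at key
  have h₁ : |((x.1 - y.1 : ℤ) : ℝ)| ≤ euclDist x y :=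
    Real.abs_le_sqrt (le_add_of_nonneg_right (sq_nonneg _))
  have h₂ : |((x.2 - y.2 : ℤ) : ℝ)| ≤ euclDist x y :=
    Real.abs_le_sqrt (le_add_of_nonneg_left (sq_nonneg _))
  refine key.trans ?_
  gcongr
  · exact le_rfl
  · linarith

lemma one_add_inv_mul_add_sqrt_le {L d : ℝ} (hL : 1 ≤ L) (hd : 8 * L ^ 2 ≤ d) :
    (1 + 1 / L) * (d + √(2 * d)) + 8 * L ≤ (1 + 4 / L) * d := by
  have hL₀ : 0 < L := by linarith
  have hd₀ : 0 ≤ d := le_trans (by positivity) hd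
  have hdL : 8 * L ≤ d / L := by rw [le_div_iff₀ hL₀]; linarith
  have hsqrt : √(2 * d) ≤ d / L := by
    rw [Real.sqrt_le_left (by positivity), div_pow, le_div_iff₀ (by positivity)]
    nlinarith
  calc (1 + 1 / L) * (d + √(2 * d)) + 8 * L ≤ (1 + 1 / L) * (d + d / L) + d / L := by gcongr
    _ = d + 3 * (d / L) + d / L / L := by field_simp; ring
    _ ≤ d + 4 * (d / L) := by linarith [div_le_self (by positivity : 0 ≤ d / L) hL]
    _ = (1 + 4 / L) * d := by ring

lemma rhoEZ2_le_mul (hL : 0 < L) {x y : ℤ × ℤ} (hd : 8 * L ^ 2 ≤ euclDist x y) :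
    rhoEZ2 x y ≤ (1 + 4 / L) * euclDist x y :=
  rhoEZ2_le fun _ hψ ↦ (abs_sub_le_euclDist hψ hL x y).trans
    (one_add_inv_mul_add_sqrt_le (by exact_mod_cast hL) hd)

end UpperBound

theorem stmt19 :
    ∀ ε : ℝ, 0 < ε → ∃ R : ℝ, 0 < R ∧ ∀ x y : ℤ × ℤ, R ≤ euclDist x y →
      |rhoEZ2 x y / euclDist x y - 1| < ε := by
  intro ε hε
  obtain ⟨L, hL⟩ := exists_nat_gt (4 / ε)
  have hL₀ : (0 : ℝ) < L := (by positivity : (0 : ℝ) < 4 / ε).trans hL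
  have h4L : 4 / (L : ℝ) < ε := by rwa [div_lt_iff₀ hL₀, mul_comm, ← div_lt_iff₀ hε]
  refine ⟨8 * L ^ 2, by positivity, fun x y hR ↦ ?_⟩
  have hd : 0 < euclDist x y := (by positivity : (0 : ℝ) < 8 * L ^ 2).trans_le hR
  have hxy : x ≠ y := by rintro rfl; simp [euclDist] at hd
  have upper := rhoEZ2_le_mul (Nat.cast_pos.mp hL₀) hR
  have lower := div_one_add_le_rhoEZ2 hxy hε
  have hlow : (1 - ε) * euclDist x y < euclDist x y / (1 + ε) := by
    rw [lt_div_iff₀ (by positivity)]; nlinarith [mul_pos hd (mul_pos hε hε)]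
  rw [abs_sub_lt_iff, sub_lt_iff_lt_add', div_lt_iff₀ hd, sub_lt_comm, lt_div_iff₀ hd]
  constructor <;> nlinarith

end
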